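/- Let f be a bounded holomorphic function on the open unit disk 𝔻 with |f(λ)| ≤ 1 for all λ ∈ 𝔻. Then both kernels K₁(λ, z) = (2·conj(f(λ))·f(z) − conj(f(λ))²·f(z)²) / (1 − conj(λ)·z)² and K₂(λ, z) = (1 − 2·conj(f(λ))·f(z) + conj(f(λ))²·f(z)²) / (1 − conj(λ)·z)² are positive semi-definite on 𝔻. -/

import Mathlib

open Complex Metric ComplexOrder

/-- A kernel `K` on the open unit disk is positive semi-definite if for every finite
family of points in the disk and complex coefficients, the associated quadratic form
is a nonnegative real number (using the partial order on `ℂ`). -/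
def IsPSDKernelOnDisk (K : ℂ → ℂ → ℂ) : Prop :=
  ∀ (n : ℕ) (lam : Fin n → ℂ), (∀ i, ‖lam i‖ < 1) →
    ∀ c : Fin n → ℂ,
      0 ≤ ∑ i, ∑ j, (starRingEnd ℂ) (c i) * c j * K (lam i) (lam j)

/-!
For `f` holomorphic on a neighbourhood of the closed disk with `‖f‖ ≤ 1` on the circle, the
Cauchy formula writes the quadratic form of the Pick kernel
`(1 - conj (f λ) * f z) / (1 - conj λ * z)` at `λ₁, …, λₙ` as `(‖u‖² - ‖w‖²) / 2π`, where
`u = ∑ cᵢ sᵢ` and `w = ∑ cᵢ f(λᵢ) sᵢ` are combinations of the Szegő kernels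
`sᵢ(θ) = (1 - λᵢ e^{-iθ})⁻¹` in `L²` of the circle; the same formula gives `‖w‖² = ⟨w, f u⟩`,
so `‖w‖² ≤ ‖w‖ ‖u‖` and the form is nonnegative. A general Schur function is the limit of its
dilations `f (r z)`, `r → 1`, and positive semi-definite matrices form a closed set.

With `S = 1 / (1 - conj λ * z)` (the Pick kernel of `0`), `D` the Pick kernel of `f` and
`F = conj (f λ) * f z`, the two kernels of the theorem are the Schur products `F ⊙ S ⊙ (S + D)`
and `D ⊙ D`, hence positive semi-definite by the Schur product theorem.
-/

open scoped Real

open ComplexConjugate Filter Topology Matrix intervalIntegral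

lemma one_sub_mul_ne_zero {v w : ℂ} (hv : ‖v‖ < 1) (hw : ‖w‖ ≤ 1) : 1 - v * w ≠ 0 := by
  refine sub_ne_zero.2 (ne_of_apply_ne norm ?_)
  rw [norm_one, norm_mul]
  nlinarith [norm_nonneg v, norm_nonneg w]

lemma conj_circleMap_mul_self (θ : ℝ) : conj (circleMap 0 1 θ) * circleMap 0 1 θ = 1 := by
  rw [← normSq_eq_conj_mul_self, normSq_eq_norm_sq, norm_circleMap_zero]; simp

/-- Cauchy's formula on the unit circle: there `dz / (z - w) = i (1 - w * conj z)⁻¹ dθ`. -/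
theorem integral_mul_inv_one_sub_mul_conj_circleMap {g : ℂ → ℂ}
    (hg : DifferentiableOn ℂ g (closedBall 0 1)) {w : ℂ} (hw : ‖w‖ < 1) :
    ∫ θ in 0..2 * π, g (circleMap 0 1 θ) * (1 - w * conj (circleMap 0 1 θ))⁻¹ = 2 * π * g w := by
  have hcauchy := hg.circleIntegral_sub_inv_smul (mem_ball_zero_iff.2 hw)
  have hpoint : ∀ θ : ℝ, g (circleMap 0 1 θ) * (1 - w * conj (circleMap 0 1 θ))⁻¹ =
      I⁻¹ * (deriv (circleMap 0 1) θ • (circleMap 0 1 θ - w)⁻¹ • g (circleMap 0 1 θ)) := by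
    intro θ
    have h1 : 1 - w * conj (circleMap 0 1 θ) = conj (circleMap 0 1 θ) * (circleMap 0 1 θ - w) := by
      linear_combination (conj_circleMap_mul_self θ).symm
    have h2 : (conj (circleMap 0 1 θ))⁻¹ = circleMap 0 1 θ :=
      inv_eq_of_mul_eq_one_right (conj_circleMap_mul_self θ)
    rw [h1, mul_inv, h2, deriv_circleMap, smul_eq_mul, smul_eq_mul]
    field_simp [I_ne_zero]
  rw [circleIntegral] at hcauchy
  rw [integral_congr fun θ _ => hpoint θ, integral_const_mul, hcauchy, smul_eq_mul]
  field_simp [I_ne_zero]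

lemma continuous_inv_one_sub_mul_conj_circleMap {w : ℂ} (hw : ‖w‖ < 1) :
    Continuous fun θ => (1 - w * conj (circleMap 0 1 θ))⁻¹ :=
  (continuous_const.sub (continuous_const.mul
    (continuous_conj.comp (continuous_circleMap 0 1)))).inv₀
    fun θ => one_sub_mul_ne_zero hw (by simp)

/-- Reproducing property of the Szegő kernels `θ ↦ (1 - w * conj (circleMap 0 1 θ))⁻¹`. -/
theorem integral_conj_szego_mul_szego {h : ℂ → ℂ} (hh : DifferentiableOn ℂ h (closedBall 0 1))
    {v w : ℂ} (hv : ‖v‖ < 1) (hw : ‖w‖ < 1) :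
    ∫ θ in 0..2 * π, conj (1 - v * conj (circleMap 0 1 θ))⁻¹ *
        (h (circleMap 0 1 θ) * (1 - w * conj (circleMap 0 1 θ))⁻¹) =
      2 * π * (h w * (1 - conj v * w)⁻¹) := by
  have hk : DifferentiableOn ℂ (fun z => h z * (1 - conj v * z)⁻¹) (closedBall 0 1) :=
    hh.mul <| ((differentiableOn_const 1).sub
      ((differentiableOn_const _).mul differentiableOn_id)).inv
      fun z hz => one_sub_mul_ne_zero (by rwa [norm_conj]) (mem_closedBall_zero_iff.1 hz)
  rw [← integral_mul_inv_one_sub_mul_conj_circleMap hk hw]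
  refine integral_congr fun θ _ => ?_
  simp only [map_inv₀, map_sub, map_one, map_mul, conj_conj]
  ring

theorem integral_conj_sum_mul_sum {ι : Type*} [Fintype ι] {a b : ℝ} {p : ι → ℝ → ℂ}
    (hp : ∀ i, Continuous (p i)) {G : ℝ → ℂ} (hG : Continuous G) (x y : ι → ℂ) :
    ∫ θ in a..b, conj (∑ i, x i * p i θ) * (G θ * ∑ j, y j * p j θ) =
      ∑ i, ∑ j, conj (x i) * y j * ∫ θ in a..b, conj (p i θ) * (G θ * p j θ) := by
  calc ∫ θ in a..b, conj (∑ i, x i * p i θ) * (G θ * ∑ j, y j * p j θ)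
      = ∫ θ in a..b, ∑ i, ∑ j, conj (x i) * y j * (conj (p i θ) * (G θ * p j θ)) := by
        refine integral_congr fun θ _ => ?_
        rw [map_sum, Finset.mul_sum, Finset.sum_mul_sum]
        refine Finset.sum_congr rfl fun i _ => Finset.sum_congr rfl fun j _ => ?_
        rw [map_mul]
        ring
    _ = _ := by
        rw [integral_finsetSum fun i _ => Continuous.intervalIntegrable (by fun_prop) _ _]
        refine Finset.sum_congr rfl fun i _ => ?_
        rw [integral_finsetSum fun j _ => Continuous.intervalIntegrable (by fun_prop) _ _]
        exact Finset.sum_congr rfl fun j _ => integral_const_mul _ _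

lemma integral_conj_mul_self {a b : ℝ} (u : ℝ → ℂ) :
    ∫ θ in a..b, conj (u θ) * u θ = ((∫ θ in a..b, ‖u θ‖ ^ 2 : ℝ) : ℂ) := by
  rw [← integral_ofReal]
  refine integral_congr fun θ _ => ?_
  simp [← normSq_eq_conj_mul_self, normSq_eq_norm_sq]

theorem integral_norm_sq_le_of_integral_conj_mul_eq {a b : ℝ} (hab : a ≤ b) {u w G : ℝ → ℂ}
    (hu : Continuous u) (hw : Continuous w) (hG : Continuous G) (hG1 : ∀ θ, ‖G θ‖ ≤ 1)
    (h : ∫ θ in a..b, conj (w θ) * (G θ * u θ) = ∫ θ in a..b, conj (w θ) * w θ) :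
    ∫ θ in a..b, ‖w θ‖ ^ 2 ≤ ∫ θ in a..b, ‖u θ‖ ^ 2 := by
  have hB : 0 ≤ ∫ θ in a..b, ‖w θ‖ ^ 2 := integral_nonneg hab fun θ _ => sq_nonneg _
  have hpoint : ∀ θ, ‖conj (w θ) * (G θ * u θ)‖ ≤ (‖w θ‖ ^ 2 + ‖u θ‖ ^ 2) / 2 := fun θ => by
    rw [norm_mul, norm_mul, norm_conj]
    nlinarith [sq_nonneg (‖w θ‖ - ‖u θ‖), hG1 θ, norm_nonneg (G θ),
      mul_nonneg (norm_nonneg (w θ)) (norm_nonneg (u θ))]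
  have key : ∫ θ in a..b, ‖w θ‖ ^ 2 ≤
      ((∫ θ in a..b, ‖w θ‖ ^ 2) + ∫ θ in a..b, ‖u θ‖ ^ 2) / 2 :=
    calc ∫ θ in a..b, ‖w θ‖ ^ 2
        = ‖∫ θ in a..b, conj (w θ) * w θ‖ := by
          rw [integral_conj_mul_self, norm_real, Real.norm_of_nonneg hB]
      _ = ‖∫ θ in a..b, conj (w θ) * (G θ * u θ)‖ := by rw [h]
      _ ≤ ∫ θ in a..b, ‖conj (w θ) * (G θ * u θ)‖ := norm_integral_le_integral_norm hab
      _ ≤ ∫ θ in a..b, (‖w θ‖ ^ 2 + ‖u θ‖ ^ 2) / 2 :=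
          integral_mono_on hab (Continuous.intervalIntegrable (by fun_prop) _ _)
            (Continuous.intervalIntegrable (by fun_prop) _ _) fun θ _ => hpoint θ
      _ = _ := by
          rw [integral_div, integral_add (Continuous.intervalIntegrable (by fun_prop) _ _)
            (Continuous.intervalIntegrable (by fun_prop) _ _)]
  linarith

lemma star_dotProduct_mulVec_eq_sum {ι : Type*} [Fintype ι] (M : Matrix ι ι ℂ) (x : ι → ℂ) :
    star x ⬝ᵥ (M *ᵥ x) = ∑ i, ∑ j, conj (x i) * x j * M i j := by
  simp only [dotProduct, mulVec, Finset.mul_sum, Pi.star_apply, RCLike.star_def]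
  exact Finset.sum_congr rfl fun i _ => Finset.sum_congr rfl fun j _ => by ring

noncomputable def pickMatrix {ι : Type*} (f : ℂ → ℂ) (lam : ι → ℂ) : Matrix ι ι ℂ :=
  Matrix.of fun i j => (1 - conj (f (lam i)) * f (lam j)) / (1 - conj (lam i) * lam j)

lemma isHermitian_pickMatrix {ι : Type*} (f : ℂ → ℂ) (lam : ι → ℂ) :
    (pickMatrix f lam).IsHermitian :=
  IsHermitian.ext fun i j => by
    simp only [pickMatrix, of_apply, RCLike.star_def, map_div₀, map_sub, map_one, map_mul,
      conj_conj]
    ring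

theorem posSemidef_pickMatrix_of_closedBall {f : ℂ → ℂ}
    (hf : DifferentiableOn ℂ f (closedBall 0 1)) (hle : ∀ z ∈ sphere (0 : ℂ) 1, ‖f z‖ ≤ 1)
    {ι : Type*} [Fintype ι] {lam : ι → ℂ} (hlam : ∀ i, ‖lam i‖ < 1) :
    (pickMatrix f lam).PosSemidef := by
  refine .of_dotProduct_mulVec_nonneg (isHermitian_pickMatrix f lam) fun c => ?_
  set s : ι → ℝ → ℂ := fun i θ => (1 - lam i * conj (circleMap 0 1 θ))⁻¹
  have hs : ∀ i, Continuous (s i) := fun i => continuous_inv_one_sub_mul_conj_circleMap (hlam i)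
  have hcirc : ∀ {h : ℂ → ℂ}, DifferentiableOn ℂ h (closedBall 0 1) →
      Continuous fun θ => h (circleMap 0 1 θ) := fun hh =>
    hh.continuousOn.comp_continuous (continuous_circleMap 0 1)
      fun θ => circleMap_mem_closedBall 0 zero_le_one θ
  have hgram : ∀ {h : ℂ → ℂ}, DifferentiableOn ℂ h (closedBall 0 1) → ∀ x y : ι → ℂ,
      ∫ θ in 0..2 * π, conj (∑ i, x i * s i θ) * (h (circleMap 0 1 θ) * ∑ j, y j * s j θ) =
        2 * π * ∑ i, ∑ j, conj (x i) * y j * (h (lam j) * (1 - conj (lam i) * lam j)⁻¹) := by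
    intro h hh x y
    rw [integral_conj_sum_mul_sum hs (hcirc hh)]
    simp only [s, integral_conj_szego_mul_szego hh (hlam _) (hlam _), Finset.mul_sum]
    exact Finset.sum_congr rfl fun i _ => Finset.sum_congr rfl fun j _ => by ring
  set x : ι → ℂ := fun i => c i * f (lam i)
  have hu := hgram (differentiableOn_const 1) c c
  have hw := hgram (differentiableOn_const 1) x x
  have hwu := hgram hf x c
  simp only [one_mul, integral_conj_mul_self] at hu hw
  have hcontr := integral_norm_sq_le_of_integral_conj_mul_eq Real.two_pi_pos.le
    (u := fun θ => ∑ i, c i * s i θ) (w := fun θ => ∑ i, x i * s i θ)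
    (continuous_finsetSum _ fun i _ => continuous_const.mul (hs i))
    (continuous_finsetSum _ fun i _ => continuous_const.mul (hs i)) (hcirc hf)
    (fun θ => hle _ (circleMap_mem_sphere 0 zero_le_one θ))
    (hwu.trans (by
      rw [integral_conj_mul_self, hw]
      exact congrArg _ (Finset.sum_congr rfl fun i _ => Finset.sum_congr rfl fun j _ => by
        simp only [x, map_mul]; ring)))
  have hform : ∑ i, ∑ j, conj (c i) * c j * pickMatrix f lam i j =
      (((∫ θ in 0..2 * π, ‖∑ i, c i * s i θ‖ ^ 2) - ∫ θ in 0..2 * π, ‖∑ i, x i * s i θ‖ ^ 2) /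
        (2 * π) : ℝ) := by
    have h2π : (2 * π : ℂ) ≠ 0 := by exact_mod_cast Real.two_pi_pos.ne'
    push_cast
    rw [hu, hw, ← mul_sub, mul_div_cancel_left₀ _ h2π, ← Finset.sum_sub_distrib]
    refine Finset.sum_congr rfl fun i _ => ?_
    rw [← Finset.sum_sub_distrib]
    refine Finset.sum_congr rfl fun j _ => ?_
    simp only [pickMatrix, of_apply, x, map_mul]
    ring
  rw [star_dotProduct_mulVec_eq_sum, hform, Complex.zero_le_real]
  exact div_nonneg (sub_nonneg.2 hcontr) Real.two_pi_pos.le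

theorem isClosed_setOf_posSemidef {ι 𝕜 : Type*} [Fintype ι] [RCLike 𝕜] :
    IsClosed {M : Matrix ι ι 𝕜 | M.PosSemidef} := by
  simp only [posSemidef_iff_dotProduct_mulVec, Set.ofPred_and, Set.ofPred_forall]
  exact (isClosed_eq (continuous_id.matrix_conjTranspose) continuous_id).inter <|
    isClosed_iInter fun x => isClosed_le continuous_const <|
      continuous_const.dotProduct (continuous_id.matrix_mulVec continuous_const)

lemma tendsto_pickMatrix_dilation {f : ℂ → ℂ} (hf : ContinuousOn f (ball 0 1))
    {ι : Type*} {lam : ι → ℂ} (hlam : ∀ i, ‖lam i‖ < 1) :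
    Tendsto (fun r : ℝ => pickMatrix (fun z => f (r * z)) lam) (𝓝 1) (𝓝 (pickMatrix f lam)) := by
  have hv : ∀ k, Tendsto (fun r : ℝ => f (r * lam k)) (𝓝 1) (𝓝 (f (lam k))) := fun k =>
    (hf.continuousAt (isOpen_ball.mem_nhds (mem_ball_zero_iff.2 (hlam k)))).tendsto.comp <|
      (by fun_prop : Continuous fun r : ℝ => (r : ℂ) * lam k).tendsto' 1 _ (by simp)
  refine tendsto_pi_nhds.2 fun i => tendsto_pi_nhds.2 fun j => ?_
  exact (tendsto_const_nhds.sub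
    (((continuous_conj.tendsto _).comp (hv i)).mul (hv j))).div_const _

theorem posSemidef_pickMatrix {f : ℂ → ℂ} (hf : DifferentiableOn ℂ f (ball 0 1))
    (hle : ∀ z ∈ ball (0 : ℂ) 1, ‖f z‖ ≤ 1) {ι : Type*} [Fintype ι] {lam : ι → ℂ}
    (hlam : ∀ i, ‖lam i‖ < 1) : (pickMatrix f lam).PosSemidef := by
  have hdil : ∀ r ∈ Set.Ioo (0 : ℝ) 1, (pickMatrix (fun z => f (r * z)) lam).PosSemidef := by
    intro r hr
    have hmaps : ∀ z ∈ closedBall (0 : ℂ) 1, (r : ℂ) * z ∈ ball 0 1 := fun z hz => by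
      rw [mem_closedBall_zero_iff] at hz
      rw [mem_ball_zero_iff, norm_mul, norm_real, Real.norm_of_nonneg hr.1.le]
      nlinarith [hr.1, hr.2, norm_nonneg z]
    exact posSemidef_pickMatrix_of_closedBall
      (hf.comp (differentiable_id.const_mul _).differentiableOn hmaps)
      (fun z hz => hle _ (hmaps z (sphere_subset_closedBall hz))) hlam
  exact isClosed_setOf_posSemidef.mem_of_tendsto
    ((tendsto_pickMatrix_dilation hf.continuousOn hlam).mono_left nhdsWithin_le_nhds)
    (eventually_of_mem (Ioo_mem_nhdsLT zero_lt_one) hdil)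

lemma isPSDKernelOnDisk_of_posSemidef {K : ℂ → ℂ → ℂ}
    (hK : ∀ n (lam : Fin n → ℂ), (∀ i, ‖lam i‖ < 1) →
      (Matrix.of fun i j => K (lam i) (lam j)).PosSemidef) :
    IsPSDKernelOnDisk K := fun n lam hlam c => by
  simpa [star_dotProduct_mulVec_eq_sum] using (hK n lam hlam).dotProduct_mulVec_nonneg c

/-- If `f` is bounded holomorphic with `|f| ≤ 1` on the disk, then both kernels
`K₁` and `K₂` are positive semi-definite. -/
theorem psd_pair_of_schur_class
    (f : ℂ → ℂ) (hf : DifferentiableOn ℂ f (ball (0 : ℂ) 1))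
    (hle : ∀ lam ∈ ball (0 : ℂ) 1, ‖f lam‖ ≤ 1) :
    IsPSDKernelOnDisk (fun lam z =>
        (2 * (starRingEnd ℂ) (f lam) * f z - ((starRingEnd ℂ) (f lam)) ^ 2 * (f z) ^ 2) /
          (1 - (starRingEnd ℂ) lam * z) ^ 2) ∧
      IsPSDKernelOnDisk (fun lam z =>
        (1 - 2 * (starRingEnd ℂ) (f lam) * f z + ((starRingEnd ℂ) (f lam)) ^ 2 * (f z) ^ 2) /
          (1 - (starRingEnd ℂ) lam * z) ^ 2) := by
  refine ⟨isPSDKernelOnDisk_of_posSemidef fun n lam hlam => ?_,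
    isPSDKernelOnDisk_of_posSemidef fun n lam hlam => ?_⟩
  · have hS : (pickMatrix 0 lam).PosSemidef :=
      posSemidef_pickMatrix (differentiableOn_const 0) (by simp) hlam
    have hD := posSemidef_pickMatrix hf hle hlam
    have hK : (of fun i j =>
          (2 * conj (f (lam i)) * f (lam j) - conj (f (lam i)) ^ 2 * f (lam j) ^ 2) /
          (1 - conj (lam i) * lam j) ^ 2) =
        vecMulVec (star (f ∘ lam)) (f ∘ lam) ⊙ pickMatrix 0 lam ⊙
          (pickMatrix 0 lam + pickMatrix f lam) := by
      ext i j
      simp only [pickMatrix, vecMulVec, of_apply, hadamard_apply, Matrix.add_apply,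
        Function.comp_apply, Pi.star_apply, Pi.zero_apply, RCLike.star_def, map_zero, zero_mul, sub_zero]
      generalize 1 - conj (lam i) * lam j = b
      ring
    rw [hK]
    exact ((posSemidef_vecMulVec_star_self (f ∘ lam)).hadamard hS).hadamard (hS.add hD)
  · have hD := posSemidef_pickMatrix hf hle hlam
    have hK : (of fun i j =>
          (1 - 2 * conj (f (lam i)) * f (lam j) + conj (f (lam i)) ^ 2 * f (lam j) ^ 2) /
          (1 - conj (lam i) * lam j) ^ 2) = pickMatrix f lam ⊙ pickMatrix f lam := by
      ext i j
      simp only [pickMatrix, of_apply, hadamard_apply]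
      generalize 1 - conj (lam i) * lam j = b
      ring
    rw [hK]
    exact hD.hadamard hD
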